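/- Let V be a finite set, q a partition of V, and X ⊆ V such that no block of q is a subset of X. Then for every partition p of V \ X: acyclic(p↑X, q) holds (as partitions of V) if and only if acyclic(p, q↓(V\X)) holds (as partitions of V\X), where acyclic(r, s) on partitions of a finite set W means |W| + |r ⊔ s| = |r| + |s|. -/
import Mathlib


/-- `acyclic(r, s)` on partitions of a finite set `W`: `|W| + |r ⊔ s| = |r| + |s|`. -/
def acyclicPart {W : Type*} (r s : Setoid W) : Prop :=
  Nat.card W + Nat.card (Quotient (r ⊔ s)) =
    Nat.card (Quotient r) + Nat.card (Quotient s)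

/-- `p↑X`: the partition of `V` obtained from a partition `p` of `V \ X` by adding each
element of `X` as a singleton block. -/
def Setoid.liftUp {V : Type*} (X : Set V) (p : Setoid {v : V // v ∉ X}) : Setoid V where
  r a b := a = b ∨ ∃ (ha : a ∉ X) (hb : b ∉ X), p.r ⟨a, ha⟩ ⟨b, hb⟩
  iseqv := by
    refine ⟨fun a => Or.inl rfl, ?_, ?_⟩
    · rintro a b (rfl | ⟨ha, hb, h⟩)
      · exact Or.inl rfl
      · exact Or.inr ⟨hb, ha, p.symm h⟩
    · rintro a b c (rfl | ⟨ha, hb, hab⟩) h2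
      · exact h2
      · rcases h2 with rfl | ⟨hb', hc, hbc⟩
        · exact Or.inr ⟨ha, hb, hab⟩
        · exact Or.inr ⟨ha, hc, p.trans hab hbc⟩

set_option linter.unusedSectionVars false


section Aux
variable {V : Type*}

private lemma rel_sup_left {α : Type*} {r s : Setoid α} {x y : α} (h : r.r x y) : (r ⊔ s).r x y :=
  Setoid.le_def.mp le_sup_left h

private lemma rel_sup_right {α : Type*} {r s : Setoid α} {x y : α} (h : s.r x y) : (r ⊔ s).r x y :=
  Setoid.le_def.mp le_sup_right h

open Classical in
private noncomputable def gmap (X : Set V) (q : Setoid V)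
    (hq : ∀ v : V, ∃ w, q.r v w ∧ w ∉ X) (v : V) : {v : V // v ∉ X} :=
  if h : v ∉ X then ⟨v, h⟩ else ⟨(hq v).choose, (hq v).choose_spec.2⟩

open Classical in
private lemma gmap_rel (X : Set V) (q : Setoid V) (hq : ∀ v : V, ∃ w, q.r v w ∧ w ∉ X)
    (v : V) : q.r v (gmap X q hq v) := by
  unfold gmap
  split
  · exact q.refl v
  · exact (hq v).choose_spec.1

open Classical in
private lemma gmap_not_mem (X : Set V) (q : Setoid V) (hq : ∀ v : V, ∃ w, q.r v w ∧ w ∉ X)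
    (v : V) (h : v ∉ X) : gmap X q hq v = ⟨v, h⟩ := dif_pos h

end Aux

section Cards
variable {V : Type*} [Finite V] (X : Set V)

private lemma card_liftUp (p : Setoid {v : V // v ∉ X}) :
    Nat.card (Quotient (Setoid.liftUp X p)) = Nat.card (Quotient p) + Nat.card X := by
  classical
  rw [← Nat.card_sum]
  have hwd : ∀ a b : V, (Setoid.liftUp X p).r a b →
      (if h : a ∈ X then Sum.inr (⟨a, h⟩ : X) else Sum.inl (Quotient.mk p ⟨a, h⟩)) =
      (if h : b ∈ X then Sum.inr (⟨b, h⟩ : X) else Sum.inl (Quotient.mk p ⟨b, h⟩)) := by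
    rintro a b (rfl | ⟨ha, hb, h⟩)
    · rfl
    · rw [dif_neg ha, dif_neg hb]
      exact congrArg Sum.inl (Quotient.sound h)
  refine Nat.card_eq_of_bijective (Quotient.lift _ hwd) ⟨?_, ?_⟩
  · intro x y
    refine Quotient.inductionOn₂ x y fun a b h => ?_
    simp only [Quotient.lift_mk] at h
    by_cases ha : a ∈ X <;> by_cases hb : b ∈ X <;>
      simp only [dif_pos, dif_neg, ha, hb] at h
    · exact Quotient.sound (Or.inl (congrArg Subtype.val (Sum.inr.inj h)))
    · simp at h
    · simp at h
    · exact Quotient.sound (Or.inr ⟨ha, hb, Quotient.exact (Sum.inl.inj h)⟩)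
  · rintro (w | x)
    · refine Quotient.inductionOn w fun a => ?_
      refine ⟨Quotient.mk _ a.val, ?_⟩
      simp only [Quotient.lift_mk, dif_neg a.prop]
    · exact ⟨Quotient.mk _ x.val, by simp only [Quotient.lift_mk, dif_pos x.prop]⟩

private lemma card_comap (q : Setoid V) (hq : ∀ v : V, ∃ w, q.r v w ∧ w ∉ X) :
    Nat.card (Quotient (Setoid.comap (Subtype.val : {v : V // v ∉ X} → V) q)) =
      Nat.card (Quotient q) := by
  apply Nat.card_eq_of_bijective (Quotient.map Subtype.val fun a b h => h)
  constructor
  · intro x y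
    refine Quotient.inductionOn₂ x y fun a b h => ?_
    simp only [Quotient.map_mk] at h
    have h2 : q.r a.val b.val := Quotient.exact h
    exact Quotient.sound h2
  · intro v
    refine Quotient.inductionOn v fun a => ?_
    obtain ⟨w, hw, hwX⟩ := hq a
    exact ⟨Quotient.mk _ ⟨w, hwX⟩, Quotient.sound (q.symm hw)⟩

private lemma card_sup (q : Setoid V) (hq : ∀ v : V, ∃ w, q.r v w ∧ w ∉ X)
    (p : Setoid {v : V // v ∉ X}) :
    Nat.card (Quotient (Setoid.liftUp X p ⊔ q)) =
      Nat.card (Quotient (p ⊔ Setoid.comap (Subtype.val : {v : V // v ∉ X} → V) q)) := by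
  symm
  have hle : p ⊔ Setoid.comap Subtype.val q ≤
      Setoid.comap (Subtype.val : {v : V // v ∉ X} → V) (Setoid.liftUp X p ⊔ q) := by
    refine sup_le ?_ ?_
    · exact Setoid.le_def.mpr fun {a b} h => rel_sup_left (Or.inr ⟨a.prop, b.prop, h⟩)
    · exact Setoid.le_def.mpr fun {a b} h => rel_sup_right h
  have hle' : Setoid.liftUp X p ⊔ q ≤
      Setoid.comap (gmap X q hq) (p ⊔ Setoid.comap Subtype.val q) := by
    refine sup_le ?_ ?_
    · refine Setoid.le_def.mpr ?_
      rintro a b (rfl | ⟨ha, hb, h⟩)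
      · exact Setoid.refl' _ _
      · show (p ⊔ Setoid.comap Subtype.val q).r (gmap X q hq a) (gmap X q hq b)
        rw [gmap_not_mem X q hq a ha, gmap_not_mem X q hq b hb]
        exact rel_sup_left h
    · refine Setoid.le_def.mpr fun {a b} h => ?_
      refine rel_sup_right (show q.r (gmap X q hq a).val (gmap X q hq b).val from ?_)
      exact q.trans (q.symm (gmap_rel X q hq a)) (q.trans h (gmap_rel X q hq b))
  apply Nat.card_eq_of_bijective
    (@Quotient.map _ _ (p ⊔ Setoid.comap Subtype.val q) (Setoid.liftUp X p ⊔ q) Subtype.val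
      fun a b h => Setoid.le_def.mp hle h)
  constructor
  · intro x y
    refine Quotient.inductionOn₂ x y fun a b h => ?_
    simp only [Quotient.map_mk] at h
    have h2 : (p ⊔ Setoid.comap Subtype.val q).r (gmap X q hq a.val) (gmap X q hq b.val) :=
      Setoid.le_def.mp hle' (Quotient.exact h)
    rw [gmap_not_mem X q hq a.val a.prop, gmap_not_mem X q hq b.val b.prop] at h2
    exact Quotient.sound h2
  · intro v
    refine Quotient.inductionOn v fun a => ?_
    exact ⟨Quotient.mk _ (gmap X q hq a),
      Quotient.sound (rel_sup_right (q.symm (gmap_rel X q hq a)))⟩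

private lemma card_V : Nat.card V = Nat.card {v : V // v ∉ X} + Nat.card X := by
  classical
  rw [← Nat.card_sum]
  exact Nat.card_congr ((Equiv.sumCompl (· ∈ X)).symm.trans (Equiv.sumComm _ _))

end Cards

/-- If no block of `q` is contained in `X`, then `acyclic(p↑X, q)` (in `V`) iff
`acyclic(p, q↓(V\X))` (in `V\X`). -/
theorem liftUp_acyclic_iff {V : Type*} [Finite V] (X : Set V) (q : Setoid V)
    (hq : ∀ v : V, ∃ w, q.r v w ∧ w ∉ X) (p : Setoid {v : V // v ∉ X}) :
    acyclicPart (Setoid.liftUp X p) q ↔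
      acyclicPart p (Setoid.comap (Subtype.val : {v : V // v ∉ X} → V) q) := by
  unfold acyclicPart
  rw [card_liftUp X p, card_comap X q hq, card_sup X q hq p, card_V X]
  omega
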